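/- Fix integers m ≥ 1, d ≥ 3 and 2 ≤ s ≤ (d+1)/2. If P ∈ ℙ^n satisfies br(P) = s and sr(P) = r with r > s, then s + r ≥ d + 2. Equivalently, σ_{s,r}(X_{m,d}) = ∅ for every r with s+1 ≤ r ≤ d+1−s. -/

import Mathlib

open scoped LinearAlgebra.Projectivization

noncomputable section

/-- The polynomial ring in `m+1` variables over `K`: homogeneous coordinate ring of `ℙ^m`. -/
abbrev PR (K : Type) [Field K] (m : ℕ) : Type := MvPolynomial (Fin (m+1)) K

/-- The space of degree-`d` forms in `m+1` variables. -/
abbrev Hd (K : Type) [Field K] (m d : ℕ) : Submodule K (PR K m) :=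
  MvPolynomial.homogeneousSubmodule (Fin (m+1)) K d

/-- Projective `m`-space over `K`. -/
abbrev Pm (K : Type) [Field K] (m : ℕ) := ℙ K (Fin (m+1) → K)

/-- The target projective space `ℙ^n`, `n = C(m+d,m) - 1`, of the degree-`d` Veronese
embedding, realized as the projectivization of the dual of the space of degree-`d` forms
(the space of degree-`d` symmetric tensors). -/
abbrev PN (K : Type) [Field K] (m d : ℕ) := ℙ K (Module.Dual K (Hd K m d))

variable {K : Type} [Field K] {m : ℕ}

/-- Hilbert function of `R/I` in degree `t`. -/
def hilbQ (I : Ideal (PR K m)) (t : ℕ) : ℕ :=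
  Module.finrank K ((Hd K m t).map (Ideal.Quotient.mkₐ K I).toLinearMap)

/-- The degree (length) of the projective scheme defined by `I`: the eventual value of the
Hilbert function of `R/I`. -/
def idealDeg (I : Ideal (PR K m)) : ℕ := Filter.limsup (fun t => hilbQ I t) Filter.atTop

/-- `h^1(𝓘_Z(d))` for the zero-dimensional scheme `Z` with (saturated) ideal `I`:
it equals `deg Z - dim (R/I)_d`. -/
def h1I (I : Ideal (PR K m)) (d : ℕ) : ℕ := idealDeg I - hilbQ I d

/-- An ideal is homogeneous. -/
def IsHomogI (I : Ideal (PR K m)) : Prop :=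
  ∀ f ∈ I, ∀ n : ℕ, MvPolynomial.homogeneousComponent n f ∈ I

/-- An ideal is saturated with respect to the irrelevant maximal ideal. -/
def IsSatI (I : Ideal (PR K m)) : Prop :=
  ∀ f : PR K m, (∀ i, MvPolynomial.X i * f ∈ I) → f ∈ I

/-- A closed subscheme of `ℙ^m`, given by its saturated homogeneous ideal. -/
structure PSub (K : Type) [Field K] (m : ℕ) where
  I : Ideal (PR K m)
  homog : IsHomogI I
  sat : IsSatI I

/-- A (closed sub)scheme is zero-dimensional iff the Hilbert function of `R/I` is bounded. -/
def IsZeroDimI (I : Ideal (PR K m)) : Prop := ∃ C, ∀ t, hilbQ I t ≤ C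

/-- A polynomial vanishes at a projective point (every homogeneous component vanishes
at a representative). -/
def vanishesAt (f : PR K m) (a : Pm K m) : Prop :=
  ∀ n : ℕ, MvPolynomial.eval a.rep (MvPolynomial.homogeneousComponent n f) = 0

/-- Zero locus of an ideal in `ℙ^m`. -/
def pzeroLocus (I : Ideal (PR K m)) : Set (Pm K m) := {a | ∀ f ∈ I, vanishesAt f a}

/-- The (saturated) homogeneous ideal of a set of points of `ℙ^m`. -/
def idealOfSet (S : Set (Pm K m)) : Ideal (PR K m) :=
  Ideal.span {f : PR K m | (∃ n, f.IsHomogeneous n) ∧ ∀ a ∈ S, MvPolynomial.eval a.rep f = 0}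

/-- Saturation of a homogeneous ideal: the smallest saturated homogeneous ideal containing it. -/
def satIdeal (J : Ideal (PR K m)) : Ideal (PR K m) := sInf {J' | J ≤ J' ∧ IsHomogI J' ∧ IsSatI J'}

/-- The scheme defined by the (saturated) ideal `I` is reduced. -/
def IsReducedI (I : Ideal (PR K m)) : Prop := I = idealOfSet (pzeroLocus I)

/-- Connected component of a zero-dimensional scheme at a point `a`: the largest subscheme
supported at `a`, i.e. the `a`-primary component. -/
def componentAt (I : Ideal (PR K m)) (a : Pm K m) : Ideal (PR K m) :=
  sInf {J | I ≤ J ∧ IsHomogI J ∧ IsSatI J ∧ pzeroLocus J ⊆ {a}}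

/-- Residual scheme of `Z` with respect to the hypersurface `f = 0`: the colon ideal `(I_Z : f)`. -/
def resIdeal (I : Ideal (PR K m)) (f : PR K m) : Ideal (PR K m) :=
  Submodule.colon I (Ideal.span {f})

/-- Degree of the scheme-theoretic intersection of the subschemes defined by `I` and `J`. -/
def interDeg (I J : Ideal (PR K m)) : ℕ := idealDeg (I ⊔ J)

/-- The degree-`d` Veronese image of a vector `v`: the evaluation-at-`v` functional on
degree-`d` forms. -/
def nu (d : ℕ) (v : Fin (m+1) → K) : Module.Dual K (Hd K m d) :=
  (MvPolynomial.aeval v).toLinearMap ∘ₗ (Hd K m d).subtype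

/-- The linear span of the Veronese image `ν_d(S)` of a set `S` of points of `ℙ^m`. -/
def dualSpan (d : ℕ) (S : Set (Pm K m)) : Submodule K (Module.Dual K (Hd K m d)) :=
  Submodule.span K ((fun a => nu d a.rep) '' S)

/-- The linear span `⟨ν_d(Z)⟩` of the Veronese image of the subscheme with ideal `I`:
the annihilator of the degree-`d` part of `I`. -/
def schemeSpanSub (I : Ideal (PR K m)) (d : ℕ) : Submodule K (Module.Dual K (Hd K m d)) where
  carrier := {φ | ∀ f : Hd K m d, (f : PR K m) ∈ I → φ f = 0}
  add_mem' := by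
    intro a b ha hb f hf
    simp [LinearMap.add_apply, ha f hf, hb f hf]
  zero_mem' := by intro f hf; simp
  smul_mem' := by
    intro c a ha f hf
    simp [LinearMap.smul_apply, ha f hf]

/-- `P ∈ ⟨ν_d(Z)⟩`, for `Z` the subscheme with ideal `I`. -/
def inSpanI (I : Ideal (PR K m)) (d : ℕ) (P : PN K m d) : Prop := P.rep ∈ schemeSpanSub I d

/-- `P ∈ ⟨ν_d(S)⟩` for a set `S` of points of `ℙ^m`. -/
def inSpanSet (d : ℕ) (S : Set (Pm K m)) (P : PN K m d) : Prop := P.rep ∈ dualSpan d S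

/-- `L` is a linear subspace of `ℙ^m`. -/
def IsLinearSub (L : Set (Pm K m)) : Prop :=
  ∃ W : Submodule K (Fin (m+1) → K), L = {a | a.submodule ≤ W}

/-- `L` is a line of `ℙ^m`. -/
def IsLine (L : Set (Pm K m)) : Prop :=
  ∃ W : Submodule K (Fin (m+1) → K), Module.finrank K W = 2 ∧ L = {a | a.submodule ≤ W}

/-- `L` is a plane of `ℙ^m`. -/
def IsPlane (L : Set (Pm K m)) : Prop :=
  ∃ W : Submodule K (Fin (m+1) → K), Module.finrank K W = 3 ∧ L = {a | a.submodule ≤ W}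

/-- `J` is the (saturated homogeneous) ideal of a conic of `ℙ^m`: a degree-2 curve contained
in a plane (possibly reducible). -/
def IsConic (J : Ideal (PR K m)) : Prop :=
  ∃ (W : Submodule K (Fin (m+1) → K)) (q : PR K m),
    Module.finrank K W = 3 ∧ q.IsHomogeneous 2 ∧
    q ∉ idealOfSet {a : Pm K m | a.submodule ≤ W} ∧
    J = satIdeal (idealOfSet {a : Pm K m | a.submodule ≤ W} ⊔ Ideal.span {q})

/-- The algebra of polynomial functions on a `K`-vector space. -/
def polyFunctions (K V : Type) [Field K] [AddCommGroup V] [Module K V] : Subalgebra K (V → K) :=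
  Algebra.adjoin K {g : V → K | ∃ φ : V →ₗ[K] K, g = ⇑φ}

/-- Zariski closure of a subset of a projective space. -/
def zClosure {V : Type} [AddCommGroup V] [Module K V] (T : Set (ℙ K V)) : Set (ℙ K V) :=
  {P | ∀ F ∈ polyFunctions K V, (∀ Q ∈ T, ∀ c : K, F (c • Q.rep) = 0) →
    ∀ c : K, F (c • P.rep) = 0}

/-- The Veronese variety `X_{m,d} = ν_d(ℙ^m)` as a subset of `PN K m d`. -/
def XSet (K : Type) [Field K] (m d : ℕ) : Set (PN K m d) :=
  {Q | ∃ a : Pm K m, Q.submodule = Submodule.span K {nu d a.rep}}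

/-- The image `ν_d(S)` of a set of points of `ℙ^m`, as a subset of `PN K m d`. -/
def nuSet (d : ℕ) (S : Set (Pm K m)) : Set (PN K m d) :=
  {Q | ∃ a ∈ S, Q.submodule = Submodule.span K {nu d a.rep}}

/-- The rank of a point `P` of `PN` with respect to a subset `Y ⊆ PN`. -/
def rankWrt {m d : ℕ} (Y : Set (PN K m d)) (P : PN K m d) : ℕ :=
  sInf {r | ∃ S : Finset (PN K m d), ↑S ⊆ Y ∧ S.card = r ∧
    P.rep ∈ Submodule.span K (Projectivization.rep '' (S : Set (PN K m d)))}

/-- The `s`-th secant variety of `Y ⊆ PN`: the Zariski closure of the union of the spans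
of `s` points of `Y`. -/
def secantWrt {m d : ℕ} (Y : Set (PN K m d)) (s : ℕ) : Set (PN K m d) :=
  zClosure {Q | ∃ S : Finset (PN K m d), ↑S ⊆ Y ∧ S.card ≤ s ∧
    Q.rep ∈ Submodule.span K (Projectivization.rep '' (S : Set (PN K m d)))}

/-- The border rank of `P` with respect to `Y ⊆ PN`. -/
def brankWrt {m d : ℕ} (Y : Set (PN K m d)) (P : PN K m d) : ℕ :=
  sInf {s | 0 < s ∧ P ∈ secantWrt Y s}

/-- Symmetric rank. -/
def srank {m : ℕ} (d : ℕ) (P : PN K m d) : ℕ := rankWrt (XSet K m d) P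

/-- Border rank. -/
def brank {m : ℕ} (d : ℕ) (P : PN K m d) : ℕ := brankWrt (XSet K m d) P

/-- Cactus rank: minimal degree of a zero-dimensional closed subscheme `E ⊂ ℙ^m` with
`P ∈ ⟨ν_d(E)⟩`. -/
def crank {m : ℕ} (d : ℕ) (P : PN K m d) : ℕ :=
  sInf {c | ∃ Z : PSub K m, IsZeroDimI Z.I ∧ idealDeg Z.I = c ∧ inSpanI Z.I d P}

/-- `σ_{s,r}(X_{m,d})`. -/
def sigmaSet (K : Type) [Field K] (m d s r : ℕ) : Set (PN K m d) :=
  {P | brank d P = s ∧ srank d P = r}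

/-- A property `Φ` holds for a general `k`-tuple of points of the linear subspace of `ℙ^m`
determined by `W`. -/
def GenerallyOn (W : Submodule K (Fin (m+1) → K)) (k : ℕ)
    (Φ : (Fin k → Pm K m) → Prop) : Prop :=
  ∃ w : Fin 3 → W, Submodule.span K (Set.range fun j => (w j : Fin (m+1) → K)) = W ∧
    ∃ F : MvPolynomial (Fin k × Fin 3) K, F ≠ 0 ∧
      ∀ c : Fin k → Fin 3 → K,
        MvPolynomial.eval (fun p => c p.1 p.2) F ≠ 0 →
        ∀ e : Fin k → Pm K m,
          (∀ i, (e i).submodule = Submodule.span K {∑ j, c i j • (w j : Fin (m+1) → K)}) → Φ e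

end

/-!
Write `P = ∑_{a ∈ A} c_a ν_d(a)` with `|A| = r = sr(P)`; minimality makes the `c_a` nonzero.
Suppose `r + s ≤ d + 1` and pick `B ⊆ A` with `|B| = s + 1`. For `b ∈ B` there are forms `g_b`
of degree `r - 1` vanishing on `A \ {b}` but not at `b`, and `e_b` of degree `d + 1 - r ≥ s`
vanishing on `B \ {b}` but not at `b`. The determinant of the `(s+1) × (s+1)` matrix
`(ψ(g_b e_{b'}))` is a polynomial in `ψ`; on a combination of at most `s` Veronese points that
matrix factors through a space of dimension at most `s`, so the determinant vanishes on
`σ_s(X_{m,d})`. At `P` the matrix is diagonal with nonzero entries, so `br(P) > s`.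
-/

open MvPolynomial

theorem Submodule.exists_sum_smul_eq_of_notMem_span_erase {R M α : Type*} [Semiring R]
    [AddCommMonoid M] [Module R M] [DecidableEq α] {v : α → M} {A : Finset α} {x : M}
    (hx : x ∈ span R (v '' A)) (hmin : ∀ a ∈ A, x ∉ span R (v '' ↑(A.erase a))) :
    ∃ c : α → R, (∀ a ∈ A, c a ≠ 0) ∧ ∑ a ∈ A, c a • v a = x := by
  obtain ⟨c, hc⟩ := (mem_span_image_finset_iff_exists_fun' R).mp hx
  refine ⟨c, fun a ha hca => hmin a ha ?_, hc⟩
  rw [← hc, ← Finset.sum_erase A (by rw [hca, zero_smul])]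
  exact (mem_span_image_finset_iff_exists_fun' R).mpr ⟨c, rfl⟩

theorem Matrix.det_mul_eq_zero_of_card_lt {K ι κ : Type*} [Field K] [Fintype ι] [Fintype κ]
    [DecidableEq ι] (X : Matrix ι κ K) (Y : Matrix κ ι K)
    (h : Fintype.card κ < Fintype.card ι) : (X * Y).det = 0 := by
  by_contra hdet
  have hrank := rank_of_isUnit (X * Y) ((isUnit_iff_isUnit_det _).mpr (Ne.isUnit hdet))
  have := (rank_mul_le_right X Y).trans (rank_le_card_height Y)
  omega

theorem det_mem_polyFunctions {K V ι : Type} [Field K] [AddCommGroup V] [Module K V]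
    [Fintype ι] [DecidableEq ι] (φ : ι → ι → V →ₗ[K] K) :
    (fun v => (Matrix.of fun i j => φ i j v).det) ∈ polyFunctions K V := by
  let M : Matrix ι ι (polyFunctions K V) :=
    Matrix.of fun i j => ⟨φ i j, Algebra.subset_adjoin ⟨φ i j, rfl⟩⟩
  convert M.det.2 using 1
  funext v
  exact (RingHom.map_det ((Pi.evalRingHom (fun _ : V => K) v).comp
    (polyFunctions K V).val.toRingHom) M).symm

section Veronese

variable {K : Type} [Field K] {m d : ℕ}

theorem nu_apply (v : Fin (m+1) → K) (f : Hd K m d) : nu d v f = eval v (f : PR K m) := rfl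

theorem exists_isHomogeneous_one_separating {a b : Pm K m} (hab : a ≠ b) :
    ∃ f : PR K m, f.IsHomogeneous 1 ∧ eval b.rep f = 0 ∧ eval a.rep f ≠ 0 := by
  have ha : a.rep ∉ Submodule.span K {b.rep} := by
    intro h
    obtain ⟨t, ht⟩ := Submodule.mem_span_singleton.mp h
    refine hab ?_
    rw [← a.mk_rep, ← b.mk_rep, Projectivization.mk_eq_mk_iff']
    exact ⟨t, ht⟩
  obtain ⟨L, hLa, hLb⟩ := Submodule.exists_dual_map_eq_bot_of_notMem ha inferInstance
  have hLb : L b.rep = 0 := by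
    simpa [hLb] using Submodule.mem_map_of_mem (f := L) (Submodule.mem_span_singleton_self b.rep)
  have eval_eq (v : Fin (m+1) → K) :
      eval v (∑ i, C (L fun j => if i = j then 1 else 0) * X i) = L v := by
    simp [LinearMap.pi_apply_eq_sum_univ L v, mul_comm]
  exact ⟨_, IsHomogeneous.sum _ _ _ fun i _ => isHomogeneous_C_mul_X _ i,
    by rw [eval_eq, hLb], by rwa [eval_eq]⟩

theorem exists_isHomogeneous_separating {a : Pm K m} {T : Finset (Pm K m)} (ha : a ∉ T)
    {n : ℕ} (hn : T.card ≤ n) :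
    ∃ f : PR K m, f.IsHomogeneous n ∧ (∀ b ∈ T, eval b.rep f = 0) ∧
      eval a.rep f ≠ 0 := by
  classical
  induction T using Finset.induction_on generalizing n with
  | empty =>
    obtain ⟨i, hi⟩ := Function.ne_iff.mp a.rep_nonzero
    exact ⟨X i ^ n, by simpa using (isHomogeneous_X K i).pow n, by simp,
      by simpa using pow_ne_zero n hi⟩
  | insert b T hbT ih =>
    rw [Finset.mem_insert, not_or] at ha
    rw [Finset.card_insert_of_notMem hbT] at hn
    obtain ⟨l, hl, hlb, hla⟩ := exists_isHomogeneous_one_separating ha.1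
    obtain ⟨f, hf, hfT, hfa⟩ := ih ha.2 (n := n - 1) (by omega)
    refine ⟨l * f, by simpa [show 1 + (n - 1) = n by omega] using hl.mul hf, ?_,
      by simpa using ⟨hla, hfa⟩⟩
    simp only [Finset.mem_insert, forall_eq_or_imp, map_mul, hlb, zero_mul, true_and]
    exact fun c hc => by rw [hfT c hc, mul_zero]

theorem nu_rep_ne_zero (a : Pm K m) : nu d a.rep ≠ 0 := by
  obtain ⟨f, hf, -, hfa⟩ :=
    exists_isHomogeneous_separating (Finset.notMem_empty a) (Nat.zero_le d)
  exact fun h => hfa (LinearMap.congr_fun h ⟨f, hf⟩)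

end Veronese

section Rank

variable {K : Type} [Field K] {m d : ℕ}

theorem exists_finset_span_rep_le_dualSpan {S : Finset (PN K m d)} (hS : ↑S ⊆ XSet K m d) :
    ∃ A : Finset (Pm K m), A.card ≤ S.card ∧
      Submodule.span K (Projectivization.rep '' (S : Set (PN K m d))) ≤
        dualSpan d (A : Set (Pm K m)) := by
  classical
  choose pt hpt using fun Q : S => hS Q.2
  refine ⟨Finset.univ.image pt, Finset.card_image_le.trans (by simp), ?_⟩
  rw [Submodule.span_le]
  rintro _ ⟨Q, hQ, rfl⟩
  have hrep : Q.rep ∈ Submodule.span K {nu d (pt ⟨Q, hQ⟩).rep} := by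
    rw [← hpt ⟨Q, hQ⟩, Projectivization.submodule_eq]
    exact Submodule.mem_span_singleton_self _
  refine Submodule.span_singleton_le_iff_mem _ _ |>.mpr ?_ hrep
  exact Submodule.subset_span ⟨_, by simp, rfl⟩

theorem srank_le_card {P : PN K m d} {A : Finset (Pm K m)}
    (hP : P.rep ∈ dualSpan d (A : Set (Pm K m))) : srank d P ≤ A.card := by
  classical
  let S : Finset (PN K m d) :=
    A.image fun a : Pm K m => Projectivization.mk K (nu d a.rep) (nu_rep_ne_zero a)
  unfold srank rankWrt
  refine le_trans (Nat.sInf_le ⟨S, ?_, rfl, ?_⟩) Finset.card_image_le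
  · rintro _ hQ
    obtain ⟨a, -, rfl⟩ := Finset.mem_image.mp hQ
    exact ⟨a, Projectivization.submodule_mk _ _⟩
  · refine Submodule.span_le.mpr ?_ hP
    rintro _ ⟨a, ha, rfl⟩
    let Q : PN K m d := Projectivization.mk K (nu d a.rep) (nu_rep_ne_zero a)
    have hnu : nu d a.rep ∈ Submodule.span K {Q.rep} := by
      rw [← Projectivization.submodule_eq, Projectivization.submodule_mk]
      exact Submodule.mem_span_singleton_self _
    refine (Submodule.span_singleton_le_iff_mem _ _).mpr ?_ hnu
    exact Submodule.subset_span ⟨Q, Finset.mem_image_of_mem _ ha, rfl⟩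

theorem exists_minimal_finset_dualSpan [DecidableEq (Pm K m)] {P : PN K m d}
    (hP : 0 < srank d P) :
    ∃ A : Finset (Pm K m), A.card = srank d P ∧ P.rep ∈ dualSpan d (A : Set (Pm K m)) ∧
      ∀ a ∈ A, P.rep ∉ dualSpan d (A.erase a : Set (Pm K m)) := by
  obtain ⟨S, hSX, hScard, hPS⟩ := Nat.sInf_mem (Nat.nonempty_of_pos_sInf hP)
  change S.card = srank d P at hScard
  obtain ⟨A, hAS, hle⟩ := exists_finset_span_rep_le_dualSpan hSX
  have hPA := hle hPS
  have hrA := srank_le_card hPA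
  refine ⟨A, by omega, hPA, fun a ha hPa => ?_⟩
  have := srank_le_card hPa
  rw [Finset.card_erase_of_mem ha] at this
  omega

end Rank

section Secant

variable {K : Type} [Field K] {m d : ℕ} {ι : Type} [Fintype ι] [DecidableEq ι]

theorem det_eq_zero_of_mem_dualSpan (g e : ι → PR K m) (hge : ∀ i j, g i * e j ∈ Hd K m d)
    {A : Finset (Pm K m)} (hA : A.card < Fintype.card ι) {ψ : Module.Dual K (Hd K m d)}
    (hψ : ψ ∈ dualSpan d (A : Set (Pm K m))) :
    (Matrix.of fun i j => ψ ⟨g i * e j, hge i j⟩).det = 0 := by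
  obtain ⟨μ, rfl⟩ := (Submodule.mem_span_image_finset_iff_exists_fun K).mp hψ
  have hfactor :
      (Matrix.of fun i j => (∑ a, μ a • nu d (a : Pm K m).rep) ⟨g i * e j, hge i j⟩) =
      Matrix.of (fun i (a : A) => μ a * eval (a : Pm K m).rep (g i)) *
        Matrix.of fun (a : A) j => eval (a : Pm K m).rep (e j) := by
    ext i j
    simp [Matrix.mul_apply, nu_apply, mul_assoc]
  rw [hfactor]
  exact Matrix.det_mul_eq_zero_of_card_lt _ _ (by simpa using hA)

theorem det_eq_zero_of_mem_secantWrt (g e : ι → PR K m) (hge : ∀ i j, g i * e j ∈ Hd K m d)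
    {s : ℕ} (hs : s < Fintype.card ι) {P : PN K m d} (hP : P ∈ secantWrt (XSet K m d) s) :
    (Matrix.of fun i j => P.rep ⟨g i * e j, hge i j⟩).det = 0 := by
  have hF :=
    det_mem_polyFunctions fun i j => Module.Dual.eval K (Hd K m d) ⟨g i * e j, hge i j⟩
  simpa using hP _ hF (fun Q ⟨S, hSX, hS, hQ⟩ c => by
    obtain ⟨A, hAS, hle⟩ := exists_finset_span_rep_le_dualSpan hSX
    simpa using det_eq_zero_of_mem_dualSpan g e hge (by omega)
      (hle (Submodule.smul_mem _ c hQ))) 1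

end Secant

section Gap

variable {K : Type} [Field K] {m d : ℕ}

theorem notMem_secantWrt_of_sum_eq {P : PN K m d} {A : Finset (Pm K m)} {c : Pm K m → K}
    (hc : ∀ a ∈ A, c a ≠ 0) (hP : ∑ a ∈ A, c a • nu d a.rep = P.rep) {s : ℕ}
    (hsA : s < A.card) (hdeg : s + A.card ≤ d + 1) : P ∉ secantWrt (XSet K m d) s := by
  classical
  intro hPs
  obtain ⟨B, hBA, hB⟩ := Finset.exists_subset_card_eq (show s + 1 ≤ A.card by omega)
  choose g hg hgA hgb using fun b : B =>
    exists_isHomogeneous_separating (Finset.notMem_erase b.1 A) (n := A.card - 1)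
      (Finset.card_erase_of_mem (hBA b.2)).le
  choose e he heB heb using fun b : B =>
    exists_isHomogeneous_separating (Finset.notMem_erase b.1 B) (n := d + 1 - A.card)
      (by rw [Finset.card_erase_of_mem b.2]; omega)
  have hge : ∀ i j, g i * e j ∈ Hd K m d := fun i j => by
    simpa [show A.card - 1 + (d + 1 - A.card) = d by omega] using (hg i).mul (he j)
  have hdiag : (Matrix.of fun i j => P.rep ⟨g i * e j, hge i j⟩) =
      Matrix.diagonal fun b : B => c b * eval b.1.rep (g b) * eval b.1.rep (e b) := by
    ext i j
    rw [← hP, Matrix.of_apply, LinearMap.sum_apply,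
      Finset.sum_eq_single_of_mem i.1 (hBA i.2) fun a ha hai => ?_]
    · by_cases hij : i = j
      · simp [hij, nu_apply, mul_assoc]
      · simp [Matrix.diagonal_apply_ne _ hij, nu_apply,
          heB j i (Finset.mem_erase.mpr ⟨fun h => hij (Subtype.ext h), i.2⟩)]
    · simp [nu_apply, hgA i a (Finset.mem_erase.mpr ⟨hai, ha⟩)]
  have hdet := det_eq_zero_of_mem_secantWrt g e hge (by simp [hB]) hPs
  rw [hdiag, Matrix.det_diagonal] at hdet
  exact Finset.prod_ne_zero_iff.mpr (fun (b : B) _ =>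
    mul_ne_zero (mul_ne_zero (hc b (hBA b.2)) (hgb b)) (heb b)) hdet

theorem mem_secantWrt_brankWrt {Y : Set (PN K m d)} {P : PN K m d} (hP : 0 < brankWrt Y P) :
    P ∈ secantWrt Y (brankWrt Y P) :=
  (Nat.sInf_mem (Nat.nonempty_of_pos_sInf hP)).2

theorem add_two_le_brank_add_srank {P : PN K m d} (hb : 0 < brank d P)
    (hlt : brank d P < srank d P) : d + 2 ≤ brank d P + srank d P := by
  classical
  by_contra! h
  obtain ⟨A, hA, hPA, hmin⟩ := exists_minimal_finset_dualSpan (by omega : 0 < srank d P)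
  obtain ⟨c, hc, hsum⟩ := Submodule.exists_sum_smul_eq_of_notMem_span_erase hPA hmin
  have hsec : P ∈ secantWrt (XSet K m d) (brank d P) := mem_secantWrt_brankWrt hb
  exact notMem_secantWrt_of_sum_eq hc hsum (by omega) (by omega) hsec

end Gap

theorem stmt12_general (K : Type) [Field K]
    (m d s : ℕ) (hs : 2 ≤ s) :
    (∀ P : PN K m d, ∀ r : ℕ, brank d P = s → srank d P = r → s < r → d + 2 ≤ s + r) ∧
    (∀ r : ℕ, s + 1 ≤ r → r + s ≤ d + 1 → sigmaSet K m d s r = ∅) := by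
  refine ⟨fun P r hb hr hlt => ?_, fun r hr hrd => ?_⟩
  · subst hb hr
    exact add_two_le_brank_add_srank (by omega) hlt
  · refine Set.eq_empty_of_forall_notMem fun P ⟨hb, hr⟩ => ?_
    have := add_two_le_brank_add_srank (P := P) (by omega) (by omega)
    omega

/-- First gap: for `m ≥ 1`, `d ≥ 3`, `2 ≤ s ≤ (d+1)/2`, any `P` with `br(P) = s`,
`sr(P) = r` and `r > s` satisfies `s + r ≥ d + 2`; equivalently `σ_{s,r}(X_{m,d}) = ∅`
for `s+1 ≤ r ≤ d+1-s`. -/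
theorem stmt12 (K : Type) [Field K] [IsAlgClosed K] [CharZero K]
    (m d s : ℕ) (hm : 1 ≤ m) (hd : 3 ≤ d) (hs : 2 ≤ s) (hsd : 2 * s ≤ d + 1) :
    (∀ P : PN K m d, ∀ r : ℕ, brank d P = s → srank d P = r → s < r → d + 2 ≤ s + r) ∧
    (∀ r : ℕ, s + 1 ≤ r → r + s ≤ d + 1 → sigmaSet K m d s r = ∅) :=
  stmt12_general K m d s hs
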